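/- For every finite nonempty poset P, the cube-width satisfies w*(P) ≤ |P|²/4 + 2. -/

import Mathlib

/-- The first `h + 1` layers of the cube `Q_n` (i.e. the subsets of `[n]` of
size at most `h`, ordered by inclusion) contain an induced copy of `P`. -/
def EmbedsLow (P : Type*) [PartialOrder P] (n h : ℕ) : Prop :=
  ∃ f : P → Finset (Fin n), Function.Injective f ∧ (∀ p, (f p).card ≤ h) ∧
    ∀ p q, p ≤ q ↔ f p ⊆ f q

/-- The cube-height `h*(P)`: the least `h` such that for some `n` the subsets
of `[n]` of size at most `h` contain an induced copy of `P`. -/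
noncomputable def cubeHeight (P : Type*) [PartialOrder P] : ℕ :=
  sInf {h | ∃ n, EmbedsLow P n h}

/-- The cube-width `w*(P)`: the least `w` such that the subsets of `[w]` of
size at most `h*(P)` contain an induced copy of `P`. -/
noncomputable def cubeWidth (P : Type*) [PartialOrder P] : ℕ :=
  sInf {w | EmbedsLow P w (cubeHeight P)}

/-!
Let `t` and `d` be the numbers of maximal and non-maximal elements of `P`, so `t + d = |P|`.
Sending `p` to its principal down-set embeds `P` into the subsets of `P` of size at most `d + 1`,
hence `h*(P) ≤ d + 1`. In any induced copy every set lies below the image of a maximal element,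
so the union of those `t` images, of size at most `t · h*(P)`, can serve as the ground set.
If `h*(P) ≤ d` this gives `w*(P) ≤ t d ≤ |P|²/4`; otherwise `h*(P) = d + 1` and the down-set
embedding itself gives `w*(P) ≤ |P| ≤ |P|²/4 + 2`.
-/

open Finset

section EmbedsLow

variable {P : Type*} [PartialOrder P] {h : ℕ}

lemma EmbedsLow.of_orderEmbedding {α : Type*} [Fintype α] {w : ℕ} (f : P ↪o Finset α)
    (hcard : ∀ p, #(f p) ≤ h) (hw : Fintype.card α ≤ w) : EmbedsLow P w h := by
  obtain ⟨e⟩ : Nonempty (α ↪ Fin w) :=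
    Function.Embedding.nonempty_of_card_le (by simpa using hw)
  let g : P ↪o Finset (Fin w) := f.trans (mapEmbedding e)
  exact ⟨g, g.injective, fun p => by simpa [g] using hcard p, fun p q => g.le_iff_le.symm⟩

lemma EmbedsLow.orderEmbedding {n : ℕ} (hP : EmbedsLow P n h) :
    ∃ f : P ↪o Finset (Fin n), ∀ p, #(f p) ≤ h := by
  obtain ⟨f, -, hcard, hiff⟩ := hP
  exact ⟨OrderEmbedding.ofMapLEIff f fun p q => (hiff p q).symm, hcard⟩

def OrderEmbedding.finsetSubtype {α : Type*} [DecidableEq α] (f : P ↪o Finset α)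
    (U : Finset α) (hU : ∀ p, f p ⊆ U) : P ↪o Finset U :=
  OrderEmbedding.ofMapLEIff (fun p => (f p).subtype (· ∈ U)) fun p q => by
    refine ⟨fun hpq => f.le_iff_le.1 fun a ha => ?_, fun hpq => subtype_mono (f.monotone hpq)⟩
    simpa using hpq (mem_subtype.2 ha : (⟨a, hU p ha⟩ : U) ∈ (f p).subtype (· ∈ U))

variable [Fintype P]

open Classical in
/-- Principal down-sets: `{q | q ≤ p}` contains no maximal element other than `p`. -/
lemma embedsLow_card_card_filter_not_isMax_add_one :
    EmbedsLow P (Fintype.card P) (#{p : P | ¬IsMax p} + 1) := by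
  let f : P ↪o Finset P :=
    OrderEmbedding.ofMapLEIff (fun p => ({q | q ≤ p} : Finset P)) fun p q =>
      ⟨fun hpq => by simpa using hpq (mem_filter.2 ⟨mem_univ p, le_rfl⟩),
        fun hpq r hr => by simpa using (mem_filter.1 hr).2.trans hpq⟩
  refine .of_orderEmbedding f (fun p => ?_) le_rfl
  have hsub : f p ⊆ insert p ({q | ¬IsMax q} : Finset P) := fun q hq => by
    have hqp : q ≤ p := by simpa [f] using hq
    by_cases hq : IsMax q
    · exact mem_insert.2 (.inl (le_antisymm hqp (hq hqp)))
    · exact mem_insert_of_mem (mem_filter.2 ⟨mem_univ q, hq⟩)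
  exact (card_le_card hsub).trans (card_insert_le _ _)

open Classical in
/-- Every element lies below a maximal one, so the images of the maximal elements cover the
ground set actually used by an induced copy. -/
lemma EmbedsLow.card_filter_isMax_mul {n : ℕ} (hP : EmbedsLow P n h) :
    EmbedsLow P (#{p : P | IsMax p} * h) h := by
  obtain ⟨f, hcard⟩ := hP.orderEmbedding
  let U := ({p | IsMax p} : Finset P).biUnion f
  have hU : ∀ p, f p ⊆ U := fun p => by
    obtain ⟨q, hpq, hq⟩ := Finite.exists_le_maximal (p := fun _ : P => True) (a := p) trivial
    have hqU : f q ⊆ U :=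
      subset_biUnion_of_mem f (mem_filter.2 ⟨mem_univ q, fun r hr => hq.2 trivial hr⟩)
    exact (f.monotone hpq).trans hqU
  refine .of_orderEmbedding (f.finsetSubtype U hU) (fun p => ?_) ?_
  · exact (card_subtype _ _).trans_le ((card_filter_le _ _).trans (hcard p))
  · rw [Fintype.card_coe]
    exact card_biUnion_le.trans (by simpa using sum_le_card_nsmul _ _ h fun q _ => hcard q)

end EmbedsLow

section CubeParameters

variable {P : Type*} [PartialOrder P] {n h : ℕ}

lemma cubeHeight_le (hP : EmbedsLow P n h) : cubeHeight P ≤ h :=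
  Nat.sInf_le (show h ∈ {h | ∃ n, EmbedsLow P n h} from ⟨n, hP⟩)

lemma EmbedsLow.exists_embedsLow_cubeHeight (hP : EmbedsLow P n h) :
    ∃ m, EmbedsLow P m (cubeHeight P) :=
  Nat.sInf_mem (⟨h, n, hP⟩ : {h | ∃ n, EmbedsLow P n h}.Nonempty)

lemma cubeWidth_le (hP : EmbedsLow P n (cubeHeight P)) : cubeWidth P ≤ n :=
  Nat.sInf_le hP

end CubeParameters

theorem cubeWidth_le_card_sq_div_four_general (P : Type*) [PartialOrder P] [Fintype P] :
    (cubeWidth P : ℝ) ≤ (Fintype.card P : ℝ) ^ 2 / 4 + 2 := by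
  classical
  set t := #{p : P | IsMax p}
  set d := #{p : P | ¬IsMax p}
  have htd : (t : ℝ) + d = Fintype.card P := by
    exact_mod_cast card_filter_add_card_filter_not (s := univ) (fun p : P => IsMax p)
  have hdown : EmbedsLow P (Fintype.card P) (d + 1) :=
    embedsLow_card_card_filter_not_isMax_add_one
  obtain ⟨n, hP⟩ := hdown.exists_embedsLow_cubeHeight
  have hwidth : cubeWidth P ≤ t * cubeHeight P := cubeWidth_le hP.card_filter_isMax_mul
  rcases (cubeHeight_le hdown).lt_or_eq with hlt | heq
  · have htd_width : (cubeWidth P : ℝ) ≤ t * d := by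
      exact_mod_cast hwidth.trans (Nat.mul_le_mul_left t (Nat.lt_succ_iff.1 hlt))
    rw [← htd]
    nlinarith [sq_nonneg ((t : ℝ) - d)]
  · have hcard_width : (cubeWidth P : ℝ) ≤ Fintype.card P := by
      exact_mod_cast cubeWidth_le (heq ▸ hdown)
    nlinarith [sq_nonneg ((Fintype.card P : ℝ) - 2)]

/-- For every finite nonempty poset `P`, `w*(P) ≤ |P|²/4 + 2`. -/
theorem cubeWidth_le_card_sq_div_four (P : Type*) [PartialOrder P] [Fintype P] [Nonempty P] :
    (cubeWidth P : ℝ) ≤ (Fintype.card P : ℝ) ^ 2 / 4 + 2 :=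
  cubeWidth_le_card_sq_div_four_general P
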